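/- Let G and G' be formula graphs such that G can be embedded into G' (there is a homomorphism (h, α) with h and each α_σ injective). Then there is an embedding (h', α') : G → G' such that each substitution α'_σ is bijective on the term set of sort σ and is the identity outside a finite set of variables. -/

import Mathlib

/-- A finite signature: finitely many sorts, first-order predicate symbols with
sorted finite arities, second-order relation symbols with finite arities, finitely
many constants per sort, countably infinitely many variables per sort, and no
function symbols. -/
structure Signature where
  Srt : Type
  Pred : Type
  Rel : Type
  sortFinite : Finite Srt
  predFinite : Finite Pred
  relFinite : Finite Rel
  parity : Pred → ℕ
  psort : (p : Pred) → Fin (parity p) → Srt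
  rarity : Rel → ℕ
  Const : Srt → Type
  constFinite : ∀ σ, Finite (Const σ)
  Var : Srt → Type
  varCountable : ∀ σ, Countable (Var σ)
  varInfinite : ∀ σ, Infinite (Var σ)

namespace Signature

/-- First-order terms of sort `σ`: constants and variables. -/
def Term (S : Signature) (σ : S.Srt) : Type := S.Const σ ⊕ S.Var σ

/-- A first-order literal: a predicate symbol, a polarity, and sorted arguments. -/
structure Literal (S : Signature) where
  pred : S.Pred
  pol : Bool
  args : (i : Fin (S.parity pred)) → S.Term (S.psort pred i)

/-- A formula graph: a finite set `V` of literals together with, for each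
second-order relation symbol `R`, a set of tuples from `V` of length the arity
of `R`. -/
structure FormulaGraph (S : Signature) where
  V : Set (Literal S)
  Vfin : V.Finite
  E : (R : S.Rel) → Set (Fin (S.rarity R) → Literal S)
  E_mem : ∀ R t, t ∈ E R → ∀ i, t i ∈ V

/-- The order of a formula graph: the number of its vertices. -/
noncomputable def FormulaGraph.order {S : Signature} (G : FormulaGraph S) : ℕ := G.V.ncard

/-- Applying a sort-indexed substitution to a literal. -/
def Literal.map {S : Signature} (α : ∀ σ, S.Term σ → S.Term σ) (l : Literal S) :
    Literal S :=
  ⟨l.pred, l.pol, fun i => α _ (l.args i)⟩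

/-- A homomorphism of formula graphs: a vertex map together with sort-indexed
substitutions fixing constants, compatible with the literal structure, and
preserving edges. -/
structure Hom {S : Signature} (G G' : FormulaGraph S) where
  h : Literal S → Literal S
  α : ∀ σ, S.Term σ → S.Term σ
  fixesConst : ∀ σ (c : S.Const σ), α σ (Sum.inl c) = Sum.inl c
  mapsV : ∀ l ∈ G.V, h l ∈ G'.V
  compat : ∀ l ∈ G.V, h l = Literal.map α l
  mapsE : ∀ R t, t ∈ G.E R → (fun i => h (t i)) ∈ G'.E R

/-- The identity homomorphism. -/
def Hom.id {S : Signature} (G : FormulaGraph S) : Hom G G where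
  h := fun l => l
  α := fun _ t => t
  fixesConst := fun _ _ => rfl
  mapsV := fun _ hl => hl
  compat := fun _ _ => rfl
  mapsE := fun _ _ ht => ht

/-- Composition of homomorphisms, componentwise. -/
def Hom.comp {S : Signature} {G G' G'' : FormulaGraph S}
    (f : Hom G G') (g : Hom G' G'') : Hom G G'' where
  h := fun l => g.h (f.h l)
  α := fun σ t => g.α σ (f.α σ t)
  fixesConst := by intro σ c; show g.α σ (f.α σ (Sum.inl c)) = Sum.inl c; rw [f.fixesConst, g.fixesConst]
  mapsV := fun l hl => g.mapsV _ (f.mapsV l hl)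
  compat := by
    intro l hl
    show g.h (f.h l) = Literal.map (fun σ t => g.α σ (f.α σ t)) l
    rw [g.compat _ (f.mapsV l hl), f.compat l hl]
    rfl
  mapsE := fun R t ht => g.mapsE R _ (f.mapsE R t ht)

/-- An embedding: a homomorphism injective on vertices with injective
substitutions. -/
def IsEmbedding {S : Signature} {G G' : FormulaGraph S} (f : Hom G G') : Prop :=
  Set.InjOn f.h G.V ∧ ∀ σ, Function.Injective (f.α σ)

/-- An isomorphism: a homomorphism with bijective components whose componentwise
inverses also form a homomorphism. -/
def IsIso {S : Signature} {G G' : FormulaGraph S} (f : Hom G G') : Prop :=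
  Set.BijOn f.h G.V G'.V ∧ (∀ σ, Function.Bijective (f.α σ)) ∧
  ∃ g : Hom G' G,
    (∀ l ∈ G.V, g.h (f.h l) = l) ∧ (∀ l ∈ G'.V, f.h (g.h l) = l) ∧
    (∀ σ t, g.α σ (f.α σ t) = t) ∧ (∀ σ t, f.α σ (g.α σ t) = t)

/-- Two formula graphs are isomorphic if there is an isomorphism between them. -/
def Iso {S : Signature} (G G' : FormulaGraph S) : Prop := ∃ f : Hom G G', IsIso f

/-- `G` can be embedded into `G'`. -/
def CanEmbed {S : Signature} (G G' : FormulaGraph S) : Prop :=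
  ∃ f : Hom G G', IsEmbedding f

end Signature

/-!
An injective substitution fixing constants sends variables to variables, and on the finitely
many variables occurring in `G` it is an injection between finite sets. Such a partial injection
extends to a permutation that moves only the finitely many variables in its domain and range;
replacing each substitution by this permutation changes nothing on the literals of `G`.
-/

open Function

theorem Set.InjOn.exists_perm_eqOn_of_finite {α : Type*} {g : α → α} {s : Set α}
    (hg : s.InjOn g) (hs : s.Finite) :
    ∃ π : Equiv.Perm α, s.EqOn π g ∧ {x | π x ≠ x}.Finite := by
  classical
  set B : Set α := s ∪ g '' s
  have hB : B.Finite := hs.union (hs.image g)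
  have : Finite s := hs.to_subtype
  have : Finite B := hB.to_subtype
  obtain ⟨π, hπ⟩ := Equiv.Perm.exists_extending_pair
    (fun x : s => (⟨x, .inl x.2⟩ : B)) (fun x : s => (⟨g x, .inr ⟨x, x.2, rfl⟩⟩ : B))
    (fun x y hxy => by simpa [Subtype.ext_iff] using hxy)
    (fun x y hxy => Subtype.ext (hg x.2 y.2 (by simpa [Subtype.ext_iff] using hxy)))
  refine ⟨Equiv.Perm.ofSubtype π, fun x hx => ?_, hB.subset fun x hx => ?_⟩
  · rw [Equiv.Perm.ofSubtype_apply_of_mem π (.inl hx)]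
    exact congrArg Subtype.val (hπ ⟨x, hx⟩)
  · by_contra hxB
    exact hx (Equiv.Perm.ofSubtype_apply_of_not_mem π hxB)

theorem Sum.exists_injective_inr_of_injective {β γ : Type*} {f : β ⊕ γ → β ⊕ γ}
    (hf : Injective f) (hinl : ∀ b, f (inl b) = inl b) :
    ∃ g : γ → γ, Injective g ∧ ∀ c, f (inr c) = inr (g c) := by
  have hvar (c : γ) : ∃ c', f (inr c) = inr c' := by
    rcases hfc : f (inr c) with b | c'
    · exact absurd (hf (hfc.trans (hinl b).symm)) Sum.inr_ne_inl
    · exact ⟨c', rfl⟩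
  choose g hg using hvar
  exact ⟨g, fun c d hcd => inr_injective (hf (by rw [hg, hg, hcd])), hg⟩

namespace Signature

variable {S : Signature}

def FormulaGraph.terms (G : FormulaGraph S) : Set (Σ σ, S.Term σ) :=
  ⋃ l ∈ G.V, Set.range fun i => ⟨_, l.args i⟩

def FormulaGraph.vars (G : FormulaGraph S) (σ : S.Srt) : Set (S.Var σ) :=
  {v | ⟨σ, Sum.inr v⟩ ∈ G.terms}

theorem FormulaGraph.finite_vars (G : FormulaGraph S) (σ : S.Srt) : (G.vars σ).Finite :=
  (G.Vfin.biUnion fun _ _ => Set.finite_range _).preimage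
    fun _ _ _ _ h => Sum.inr_injective (sigma_mk_injective (i := σ) (β := S.Term) h)

def Hom.withSubst {G G' : FormulaGraph S} (f : Hom G G') (α' : ∀ σ, S.Term σ → S.Term σ)
    (hconst : ∀ σ c, α' σ (Sum.inl c) = Sum.inl c)
    (hagree : ∀ t ∈ G.terms, α' t.1 t.2 = f.α t.1 t.2) : Hom G G' where
  h := f.h
  α := α'
  fixesConst := hconst
  mapsV := f.mapsV
  compat l hl := by
    rw [f.compat l hl]
    exact congrArg (Literal.mk l.pred l.pol)
      (funext fun i => (hagree ⟨_, l.args i⟩ (Set.mem_biUnion hl ⟨i, rfl⟩)).symm)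
  mapsE := f.mapsE

end Signature

open Signature in
/-- if `G` embeds into `G'` then there is an embedding whose
substitutions are bijective and are the identity outside a finite set of
variables. -/
theorem stmt7 (S : Signature) (G G' : FormulaGraph S) (h : CanEmbed G G') :
    ∃ f : Hom G G', IsEmbedding f ∧ (∀ σ, Function.Bijective (f.α σ)) ∧
      ∀ σ, ∃ W : Set (S.Var σ), W.Finite ∧
        ∀ v ∉ W, f.α σ (Sum.inr v) = Sum.inr v := by
  obtain ⟨f, hf_inj, hα_inj⟩ := h
  choose g hg_inj hg using fun σ =>
    Sum.exists_injective_inr_of_injective (hα_inj σ) (f.fixesConst σ)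
  choose π hπ hπ_fin using fun σ =>
    (hg_inj σ).injOn.exists_perm_eqOn_of_finite (G.finite_vars σ)
  let α' σ : S.Term σ ≃ S.Term σ := Equiv.sumCongr (Equiv.refl _) (π σ)
  refine ⟨f.withSubst (fun σ => α' σ) (fun _ _ => rfl) ?_, ⟨hf_inj, fun σ => (α' σ).injective⟩,
    fun σ => (α' σ).bijective, fun σ => ⟨_, hπ_fin σ, fun v hv => ?_⟩⟩
  · rintro ⟨σ, c | v⟩ ht
    · exact (f.fixesConst σ c).symm
    · exact (congrArg Sum.inr (hπ σ ht)).trans (hg σ v).symm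
  · exact congrArg Sum.inr (not_not.mp hv)
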